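/- arXiv:2411.03789 — 6 statements merged into one kernel-verified Lean document; each statement's English description precedes it below -/
import Mathlib

section
/- Let p be a prime, V a finite elementary abelian (or more generally finite abelian) p-group, and x an element of the free abelian group Z^V with coordinates (x_v). Suppose either p is odd, or the sum of all coordinates of x is divisible by 4 (with p = 2). If x is fixed by the translation action of some nonzero element u of V on coordinates (i.e., x_{v} = x_{u+v} for all v in V), then the sum over v in V of x_v · v equals 0 in V. -/
theorem stmt_0_aux {p : ℕ} (hp : p.Prime) {V : Type*} [AddCommGroup V] [Fintype V]
    [Module (ZMod p) V]
    (hV : ∀ v : V, p • v = 0) (x : V → ℤ)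
    (hpar : Odd p ∨ (4 : ℤ) ∣ ∑ v : V, x v)
    (u : V) (hu : u ≠ 0) (hfix : ∀ v : V, x v = x (u + v)) :
    ∑ v : V, x v • v = 0 := by
  haveI : Fact p.Prime := ⟨hp⟩
  have hxn : ∀ (n : ℕ) (v : V), x (n • u + v) = x v := by
    intro n
    induction n with
    | zero => intro v; simp
    | succ n ih =>
      intro v
      rw [succ_nsmul, add_assoc, ih (u + v)]
      exact (hfix v).symm
  have hx : ∀ (k : ZMod p) (v : V), x (k • u + v) = x v := by
    intro k v
    have h1 : k • u = (k.val : ℕ) • u := by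
      rw [← Nat.cast_smul_eq_nsmul (ZMod p) k.val u, ZMod.natCast_val, ZMod.cast_id]
    rw [h1, hxn]
  obtain ⟨W, hW⟩ := Submodule.exists_isCompl (Submodule.span (ZMod p) {u})
  letI : Fintype W := Fintype.ofFinite ↥W
  set f : ZMod p × W → V := fun kw => kw.1 • u + (kw.2 : V) with hf
  have hbij : Function.Bijective f := by
    constructor
    · rintro ⟨k, w⟩ ⟨k', w'⟩ h
      simp only [hf] at h
      have h2 : (k - k') • u = (w' : V) - (w : V) := by
        rw [sub_smul]; linear_combination (norm := module) h
      have hmem : (k - k') • u ∈ Submodule.span (ZMod p) {u} ⊓ W :=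
        ⟨Submodule.smul_mem _ _ (Submodule.mem_span_singleton_self u),
         by rw [h2]; exact sub_mem w'.2 w.2⟩
      rw [hW.inf_eq_bot] at hmem
      have h3 : (k - k') • u = 0 := hmem
      have hk : k = k' := by
        by_contra hne
        have hne' : k - k' ≠ 0 := sub_ne_zero_of_ne hne
        apply hu
        have := congrArg (fun y => (k - k')⁻¹ • y) h3
        simpa [smul_smul, inv_mul_cancel₀ hne'] using this
      subst hk
      rw [sub_self, zero_smul] at h2
      have h4 : (w : V) = (w' : V) := (sub_eq_zero.mp h2.symm).symm
      exact Prod.ext rfl (Subtype.ext h4)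
    · intro v
      have hv : v ∈ Submodule.span (ZMod p) {u} ⊔ W := by rw [hW.sup_eq_top]; trivial
      obtain ⟨a, ha, b, hb, hab⟩ := Submodule.mem_sup.mp hv
      obtain ⟨k, hk⟩ := Submodule.mem_span_singleton.mp ha
      exact ⟨(k, ⟨b, hb⟩), by simp [hf, hk, hab]⟩
  -- reindex the sums
  have hsum1 : ∑ v : V, x v • v = ∑ kw : ZMod p × W, x (kw.2 : V) • ((kw.1 : ZMod p) • u + (kw.2 : V)) := by
    rw [← Fintype.sum_bijective f hbij _ _ (fun kw => rfl)]
    refine Fintype.sum_congr _ _ fun kw => ?_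
    simp only [hf]
    rw [hx kw.1 (kw.2 : V)]
  have hsum2 : ∑ v : V, x v = (p : ℤ) * ∑ w : W, x (w : V) := by
    rw [← Fintype.sum_bijective f hbij _ _ (fun kw => rfl)]
    have : ∀ kw : ZMod p × W, x (f kw) = x (kw.2 : V) := fun kw => hx kw.1 _
    rw [Fintype.sum_congr _ _ this, Fintype.sum_prod_type]
    simp [Finset.sum_const, ZMod.card, mul_comm]
  set S : ZMod p := ∑ k : ZMod p, k with hS
  set T : ℤ := ∑ w : W, x (w : V) with hT
  have key : ∑ v : V, x v • v = T • (S • u) := by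
    rw [hsum1, Fintype.sum_prod_type]
    have step : ∀ k : ZMod p, ∑ w : W, x (w : V) • (k • u + (w : V))
        = T • (k • u) + ∑ w : W, x (w : V) • (w : V) := by
      intro k
      simp_rw [smul_add]
      rw [Finset.sum_add_distrib, ← Finset.sum_smul, hT]
    simp_rw [step]
    rw [Finset.sum_add_distrib, Finset.sum_const]
    have hcard : (Finset.univ : Finset (ZMod p)).card = p := by simp [ZMod.card]
    rw [hcard, hV]
    have : ∑ k : ZMod p, T • (k • u) = T • (S • u) := by
      rw [← Finset.smul_sum, ← Finset.sum_smul, hS]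
    rw [this, add_zero]
  rcases hp.eq_two_or_odd' with rfl | hodd
  · -- p = 2
    have hS2 : S = 1 := by rw [hS]; rfl
    rw [key, hS2, one_smul]
    rcases hpar with h | h
    · exact absurd h (by decide)
    · rw [hsum2] at h
      obtain ⟨m, hm⟩ : (2 : ℤ) ∣ T := by omega
      rw [hm, mul_comm, mul_smul]
      have : (2 : ℤ) • u = 0 := by
        have := hV u
        rw [← Nat.cast_smul_eq_nsmul ℤ 2 u] at this
        simpa using this
      rw [this, smul_zero]
  · -- p odd
    have hS0 : S = 0 := by
      have hneg : S = -S := by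
        have e1 : ∑ k : ZMod p, k = ∑ k : ZMod p, -k :=
          Fintype.sum_equiv (Equiv.neg (ZMod p)) _ _ (fun k => (neg_neg k).symm)
        calc S = ∑ k : ZMod p, k := hS
        _ = ∑ k : ZMod p, -k := e1
        _ = -∑ k : ZMod p, k := by rw [Finset.sum_neg_distrib]
        _ = -S := by rw [← hS]
      have h2 : (2 : ZMod p) * S = 0 := by
        rw [two_mul]
        nth_rewrite 2 [hneg]
        simp
      have h2ne : (2 : ZMod p) ≠ 0 := by
        intro hc
        have : (p : ℕ) ∣ 2 := by
          have := (ZMod.natCast_eq_zero_iff 2 p).mp (by exact_mod_cast hc)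
          exact this
        have hp2 : p = 2 := (Nat.prime_dvd_prime_iff_eq hp Nat.prime_two).mp this
        rw [hp2] at hodd
        exact (by decide : ¬ Odd 2) hodd
      have := mul_eq_zero.mp h2
      tauto
    rw [key, hS0, zero_smul, smul_zero]

/-- If a vector `x ∈ ℤ^V` (V a finite abelian group of exponent `p`) is fixed by
translation by some nonzero `u ∈ V`, and either `p` is odd or `4 ∣ Σ_v x_v`,
then `Σ_v x_v • v = 0` in `V`. -/
theorem stmt_0 {p : ℕ} (hp : p.Prime) {V : Type*} [AddCommGroup V] [Fintype V]
    (hV : ∀ v : V, p • v = 0) (x : V → ℤ)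
    (hpar : Odd p ∨ (4 : ℤ) ∣ ∑ v : V, x v)
    (u : V) (hu : u ≠ 0) (hfix : ∀ v : V, x v = x (u + v)) :
    ∑ v : V, x v • v = 0 := by
  letI : Module (ZMod p) V := AddCommGroup.zmodModule hV
  exact stmt_0_aux hp hV x hpar u hu hfix
end

section
/- Let p be a prime, V = (Z/p)^n with n ≥ 1, and let Z^V_0 = { x ∈ Z^V : Σ_v x_v = 0 }. Define ε : Z^V_0 → V by ε(x) = Σ_v x_v · v. If x ∈ Z^V_0 satisfies ε(x) ≠ 0, then the stabilizer of x under the translation action of V on Z^V_0 is trivial; consequently the V-orbit of x has exactly p^n elements. -/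
/-- For `V = (ℤ/p)^n` and `x ∈ ℤ^V` with coordinate sum zero and
`ε(x) = Σ_v x_v • v ≠ 0`, the stabilizer of `x` under the translation action of
`V` is trivial, and the `V`-orbit of `x` has exactly `p^n` elements. -/
theorem stmt_1 {p : ℕ} (hp : p.Prime) [NeZero p] (n : ℕ) (hn : 1 ≤ n)
    (x : (Fin n → ZMod p) → ℤ)
    (hx0 : ∑ v : Fin n → ZMod p, x v = 0)
    (hε : ∑ v : Fin n → ZMod p, x v • v ≠ 0) :
    (∀ u : Fin n → ZMod p, (∀ v, x v = x (u + v)) → u = 0) ∧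
      Set.ncard {y : (Fin n → ZMod p) → ℤ |
        ∃ u : Fin n → ZMod p, y = fun v => x (u + v)} = p ^ n := by
  haveI : Fact p.Prime := ⟨hp⟩
  have key : ∀ u : Fin n → ZMod p, (∀ v, x v = x (u + v)) → u = 0 := by
    intro u hu
    by_contra hne
    obtain ⟨i, hi⟩ : ∃ i, u i ≠ 0 := by
      by_contra h; push_neg at h; exact hne (funext h)
    have hnat : ∀ (m : ℕ) (v), x (m • u + v) = x v := by
      intro m
      induction m with
      | zero => simp
      | succ m ih =>
          intro v
          have h1 : (m+1) • u + v = u + (m • u + v) := by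
            rw [succ_nsmul]; abel
          rw [h1, ← hu, ih]
    have hper : ∀ (k : ZMod p) (v), x (k • u + v) = x v := by
      intro k v
      have h2 : k • u = k.val • u := by
        funext j
        simp [ZMod.natCast_val, ZMod.cast_id]
      rw [h2, hnat]
    set c : ZMod p := (u i)⁻¹ with hc
    have hci : c * u i = 1 := inv_mul_cancel₀ hi
    let e : (ZMod p × {w : Fin n → ZMod p // w i = 0}) ≃ (Fin n → ZMod p) :=
      { toFun := fun kw => kw.2.1 + kw.1 • u
        invFun := fun v => (c * v i, ⟨v - (c * v i) • u, by
          simp only [Pi.sub_apply, Pi.smul_apply, smul_eq_mul]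
          rw [mul_assoc, mul_comm (v i), ← mul_assoc, hci, one_mul, sub_self]⟩)
        left_inv := by
          rintro ⟨k, w, hw⟩
          have hv : (w + k • u) i = k * u i := by
            simp [hw]
          ext
          · simp only [hv]
            rw [← mul_assoc, mul_comm c k, mul_assoc, hci, mul_one]
          · simp only [hv]
            rw [← mul_assoc, mul_comm c k, mul_assoc, hci, mul_one]
            simp
        right_inv := by
          intro v
          simp }
    have hcard : ∀ w : Fin n → ZMod p, (p • w : Fin n → ZMod p) = 0 := by
      intro w; funext j
      simp [nsmul_eq_mul, ZMod.natCast_self]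
    have hT : ∑ w : {w : Fin n → ZMod p // w i = 0}, x w.1 = 0 := by
      have h3 : ∑ v : Fin n → ZMod p, x v
          = ∑ kw : ZMod p × {w : Fin n → ZMod p // w i = 0}, x (e kw) := by
        rw [e.sum_comp]
      have h4 : ∀ kw : ZMod p × {w : Fin n → ZMod p // w i = 0},
          x (e kw) = x kw.2.1 := by
        rintro ⟨k, w⟩
        show x (w.1 + k • u) = x w.1
        rw [add_comm, hper]
      rw [hx0] at h3
      rw [Fintype.sum_prod_type] at h3
      simp only [h4] at h3
      have h5 : (0:ℤ) = (p : ℤ) * ∑ w : {w : Fin n → ZMod p // w i = 0}, x w.1 := by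
        rw [h3]
        simp [Finset.sum_const, ZMod.card, mul_comm]
      have hp0 : (p:ℤ) ≠ 0 := by exact_mod_cast (NeZero.ne p)
      exact (mul_eq_zero.mp h5.symm).resolve_left hp0
    apply hε
    have h3 : ∑ v : Fin n → ZMod p, x v • v
        = ∑ kw : ZMod p × {w : Fin n → ZMod p // w i = 0}, x (e kw) • (e kw) :=
      (Equiv.sum_comp e (fun v => x v • v)).symm
    rw [h3, Fintype.sum_prod_type]
    have h4 : ∀ (k : ZMod p) (w : {w : Fin n → ZMod p // w i = 0}),
        x (e (k, w)) • (e (k, w)) = x w.1 • (w.1 + k • u) := by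
      intro k w
      show x (w.1 + k • u) • (w.1 + k • u) = _
      rw [add_comm w.1, hper, add_comm]
    simp only [h4]
    rw [Finset.sum_comm]
    have h6 : ∀ w : {w : Fin n → ZMod p // w i = 0},
        ∑ k : ZMod p, x w.1 • (w.1 + k • u)
          = x w.1 • ((∑ k : ZMod p, k) • u) := by
      intro w
      rw [← Finset.smul_sum]
      congr 1
      rw [Finset.sum_add_distrib, Finset.sum_const, ← Finset.sum_smul]
      simp [ZMod.card, hcard]
    simp only [h6]
    rw [← Finset.sum_smul, hT, zero_smul]
  refine ⟨key, ?_⟩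
  have hinj : Function.Injective (fun u : Fin n → ZMod p => (fun v => x (u + v))) := by
    intro a b hab
    have h7 : ∀ v, x v = x ((b - a) + v) := by
      intro v
      have := congrFun hab (-a + v)
      simp only at this
      rw [show a + (-a + v) = v by abel] at this
      rw [this, show b + (-a + v) = (b - a) + v by abel]
    have := key (b - a) h7
    have : b = a := by
      have h8 := sub_eq_zero.mp this
      exact h8
    exact this.symm
  have hset : {y : (Fin n → ZMod p) → ℤ |
      ∃ u : Fin n → ZMod p, y = fun v => x (u + v)}
      = Set.range (fun u : Fin n → ZMod p => (fun v => x (u + v))) := by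
    ext y; simp [Set.range, eq_comm]
  rw [hset, ← Set.image_univ, Set.ncard_image_of_injective _ hinj, Set.ncard_univ]
  simp [Nat.card_eq_fintype_card, ZMod.card]
end

section
/- Let p be a prime, S a finite p-group acting on a finitely generated abelian group U, and let ε : U → F_p^d be a surjective S-invariant group homomorphism (where S acts trivially on F_p^d). Suppose F_p^d = L_1 ⊕ L_2, let ε_i be the composite of ε with the projection to L_i, and assume constants C_1, C_2 such that |S·u| ≥ C_i whenever ε_i(u) ≠ 0. Then every S-invariant subset Γ of U whose generated subgroup has finite index coprime to p in U satisfies |Γ| ≥ C_1 · dim_{F_p}(L_1) + C_2 · dim_{F_p}(L_2). -/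
set_option maxHeartbeats 1000000

open Finset Submodule

theorem stmt_3_aux {p : ℕ} (hp : p.Prime) {S : Type*} [Group S] [Fintype S]
    {U : Type*} [AddCommGroup U]
    [DistribMulAction S U] {d : ℕ}
    (ε : U →+ (Fin d → ZMod p)) (hsurj : Function.Surjective ε)
    (hinv : ∀ (s : S) (u : U), ε (s • u) = ε u)
    (L₁ L₂ : Submodule (ZMod p) (Fin d → ZMod p)) (hcompl : IsCompl L₁ L₂)
    (C₁ C₂ : ℕ) (hC : C₂ ≤ C₁)
    (h₁ : ∀ u : U, Submodule.linearProjOfIsCompl L₁ L₂ hcompl (ε u) ≠ 0 →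
      C₁ ≤ Nat.card (MulAction.orbit S u))
    (h₂ : ∀ u : U, Submodule.linearProjOfIsCompl L₂ L₁ hcompl.symm (ε u) ≠ 0 →
      C₂ ≤ Nat.card (MulAction.orbit S u))
    (Γ : Finset U) (hΓinv : ∀ (s : S), ∀ g ∈ Γ, s • g ∈ Γ)
    (hcop : ¬ p ∣ (AddSubgroup.closure (Γ : Set U)).index) :
    C₁ * Module.finrank (ZMod p) L₁ + C₂ * Module.finrank (ZMod p) L₂ ≤ Γ.card := by
  haveI : Fact p.Prime := ⟨hp⟩
  haveI : NeZero p := ⟨hp.ne_zero⟩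
  classical
  set π₁ := Submodule.linearProjOfIsCompl L₁ L₂ hcompl with hπ₁
  set π₂ := Submodule.linearProjOfIsCompl L₂ L₁ hcompl.symm with hπ₂
  -- Step A: the image of Γ spans everything
  have hK : AddSubgroup.closure (ε '' (Γ : Set U)) = ⊤ := by
    rw [← AddMonoidHom.map_closure]
    set K := (AddSubgroup.closure (Γ : Set U)).map ε with hKdef
    have hdvd1 : K.index ∣ (AddSubgroup.closure (Γ : Set U)).index :=
      AddSubgroup.index_map_dvd _ hsurj
    have hdvd2 : K.index ∣ p ^ d := by
      have := AddSubgroup.index_dvd_card (H := K)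
      rwa [Nat.card_eq_fintype_card, Fintype.card_fun, ZMod.card, Fintype.card_fin] at this
    obtain ⟨i, hi, hKi⟩ := (Nat.dvd_prime_pow hp).mp hdvd2
    have hi0 : i = 0 := by
      by_contra h0
      exact hcop (dvd_trans (hKi ▸ dvd_pow_self p h0) hdvd1)
    rw [hi0, pow_zero] at hKi
    exact AddSubgroup.index_eq_one.mp hKi
  have hspan : Submodule.span (ZMod p) ((Γ.image ε : Finset _) : Set (Fin d → ZMod p)) = ⊤ := by
    rw [Finset.coe_image]
    have hle : AddSubgroup.closure (⇑ε '' (Γ : Set U)) ≤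
        (Submodule.span (ZMod p) (⇑ε '' (Γ : Set U))).toAddSubgroup :=
      (AddSubgroup.closure_le _).mpr Submodule.subset_span
    exact eq_top_iff.mpr fun x _ => hle (hK ▸ AddSubgroup.mem_top x)
  -- the nonzero values
  set T : Finset (Fin d → ZMod p) := (Γ.image ε).erase 0 with hT
  have hspanT : Submodule.span (ZMod p) (T : Set (Fin d → ZMod p)) = ⊤ := by
    have : ((Γ.image ε : Finset _) : Set (Fin d → ZMod p)) ⊆ insert 0 (T : Set _) := by
      intro x hx
      by_cases h0 : x = 0
      · exact h0 ▸ Set.mem_insert _ _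
      · exact Set.mem_insert_of_mem _ (Finset.mem_coe.mpr (Finset.mem_erase.mpr ⟨h0, hx⟩))
    rw [eq_top_iff, ← hspan]
    exact le_trans (Submodule.span_mono this) (le_of_eq Submodule.span_insert_zero)
  set A : Finset (Fin d → ZMod p) := T.filter (fun v => π₁ v ≠ 0) with hA
  -- Step B: fiberwise bounds
  set b : (Fin d → ZMod p) → ℕ := fun v => if π₁ v ≠ 0 then C₁ else C₂ with hb
  have hfiber : ∀ v ∈ T, b v ≤ (Γ.filter (fun g => ε g = v)).card := by
    intro v hv
    obtain ⟨hv0, hvim⟩ := Finset.mem_erase.mp hv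
    obtain ⟨u, hu, huv⟩ := Finset.mem_image.mp hvim
    have horb : MulAction.orbit S u ⊆ ((Γ.filter (fun g => ε g = v)) : Set U) := by
      rintro x ⟨s, rfl⟩
      simp only [Finset.coe_filter, Set.mem_setOf_eq, Finset.mem_filter]
      exact ⟨hΓinv s u hu, by rw [hinv s u, huv]⟩
    have hcard : Nat.card (MulAction.orbit S u) ≤ (Γ.filter (fun g => ε g = v)).card := by
      have h1 : (MulAction.orbit S u).ncard ≤ ((Γ.filter (fun g => ε g = v)) : Set U).ncard :=
        Set.ncard_le_ncard horb (Finset.finite_toSet _)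
      rwa [Set.ncard_coe_finset, ← Nat.card_coe_set_eq] at h1
    by_cases hπ : π₁ v ≠ 0
    · simp only [hb, if_pos hπ]
      exact le_trans (h₁ u (by rw [huv]; exact hπ)) hcard
    · simp only [hb, if_neg hπ]
      push_neg at hπ
      have hπ2 : π₂ v ≠ 0 := by
        intro h0
        apply hv0
        have hvL2 : v ∈ L₂ := (Submodule.linearProjOfIsCompl_apply_eq_zero_iff hcompl).mp hπ
        have hvL1 : v ∈ L₁ := (Submodule.linearProjOfIsCompl_apply_eq_zero_iff hcompl.symm).mp h0
        have : v ∈ L₁ ⊓ L₂ := ⟨hvL1, hvL2⟩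
        rwa [hcompl.inf_eq_bot, Submodule.mem_bot] at this
      exact le_trans (h₂ u (by rw [huv]; exact hπ2)) hcard
  -- Step C: |Γ| ≥ ∑ b
  have hsum : ∑ v ∈ T, b v ≤ Γ.card := by
    have h1 : Γ.card = ∑ v ∈ Γ.image ε, (Γ.filter (fun g => ε g = v)).card :=
      Finset.card_eq_sum_card_fiberwise (fun g hg => Finset.mem_image_of_mem ε hg)
    calc ∑ v ∈ T, b v ≤ ∑ v ∈ T, (Γ.filter (fun g => ε g = v)).card := Finset.sum_le_sum hfiber
      _ ≤ ∑ v ∈ Γ.image ε, (Γ.filter (fun g => ε g = v)).card :=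
          Finset.sum_le_sum_of_subset (Finset.erase_subset _ _)
      _ = Γ.card := h1.symm
  -- Step D: combinatorics
  have hsum2 : ∑ v ∈ T, b v = C₁ * A.card + C₂ * (T.filter (fun v => ¬ π₁ v ≠ 0)).card := by
    rw [← Finset.sum_filter_add_sum_filter_not T (fun v => π₁ v ≠ 0) b]
    congr 1
    · rw [Finset.sum_congr rfl (fun v hv => if_pos (Finset.mem_filter.mp hv).2),
        Finset.sum_const, smul_eq_mul, mul_comm]
    · rw [Finset.sum_congr rfl (fun v hv => if_neg (Finset.mem_filter.mp hv).2),
        Finset.sum_const, smul_eq_mul, mul_comm]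
  have hTcard : Module.finrank (ZMod p) L₁ + Module.finrank (ZMod p) L₂ ≤ T.card := by
    rw [Submodule.finrank_add_eq_of_isCompl hcompl]
    have := finrank_span_finset_le_card (R := ZMod p) T
    rwa [Set.finrank, hspanT, finrank_top] at this
  have hAcard : Module.finrank (ZMod p) L₁ ≤ A.card := by
    set A' : Finset L₁ := A.image (fun v => π₁ v) with hA'
    have hspanA : Submodule.span (ZMod p) ((A' : Finset L₁) : Set L₁) = ⊤ := by
      have himg : Submodule.map π₁ (Submodule.span (ZMod p) (T : Set _)) =
          Submodule.span (ZMod p) (π₁ '' (T : Set _)) := Submodule.map_span π₁ _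
      rw [hspanT, Submodule.map_top,
        (show LinearMap.range π₁ = ⊤ from Submodule.range_projectionOnto hcompl)] at himg
      have hsub : π₁ '' (T : Set _) ⊆ insert 0 ((A' : Finset L₁) : Set L₁) := by
        rintro x ⟨v, hv, rfl⟩
        by_cases hπ : π₁ v ≠ 0
        · refine Set.mem_insert_of_mem _ ?_
          rw [Finset.coe_image]
          exact Set.mem_image_of_mem _ (Finset.mem_coe.mpr (Finset.mem_filter.mpr ⟨hv, hπ⟩))
        · push_neg at hπ
          rw [hπ]; exact Set.mem_insert _ _
      rw [eq_top_iff, himg]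
      exact le_trans (Submodule.span_mono hsub) (le_of_eq Submodule.span_insert_zero)
    have h1 : Module.finrank (ZMod p) L₁ ≤ A'.card := by
      have := finrank_span_finset_le_card (R := ZMod p) A'
      rwa [Set.finrank, hspanA, finrank_top] at this
    exact le_trans h1 (Finset.card_image_le)
  -- conclude
  have hTsplit : T.card = A.card + (T.filter (fun v => ¬ π₁ v ≠ 0)).card :=
    (Finset.card_filter_add_card_filter_not _).symm
  refine le_trans ?_ hsum
  rw [hsum2]
  set a := A.card
  set t' := (T.filter (fun v => ¬ π₁ v ≠ 0)).card
  have h1 : Module.finrank (ZMod p) L₁ ≤ a := hAcard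
  have h2 : Module.finrank (ZMod p) L₁ + Module.finrank (ZMod p) L₂ ≤ a + t' := by
    rw [← hTsplit]; exact hTcard
  nlinarith [Nat.mul_le_mul_left (C₁ - C₂) h1, Nat.mul_le_mul_left C₂ h2,
    Nat.sub_add_cancel hC]

/-- Lower bound on the size of `S`-invariant `p`-generating subsets:
if `ε : U → 𝔽_p^d` is a surjective `S`-invariant homomorphism, `𝔽_p^d = L₁ ⊕ L₂`,
and every `u` with nonzero projection `ε_i(u)` to `L_i` has `S`-orbit of size at
least `C_i`, then every `S`-invariant subset of `U` generating a subgroup of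
finite index coprime to `p` has at least `C₁·dim L₁ + C₂·dim L₂` elements. -/
theorem stmt_3 {p : ℕ} (hp : p.Prime) {S : Type*} [Group S] [Fintype S]
    (hS : IsPGroup p S) {U : Type*} [AddCommGroup U] [AddGroup.FG U]
    [DistribMulAction S U] {d : ℕ}
    (ε : U →+ (Fin d → ZMod p)) (hsurj : Function.Surjective ε)
    (hinv : ∀ (s : S) (u : U), ε (s • u) = ε u)
    (L₁ L₂ : Submodule (ZMod p) (Fin d → ZMod p)) (hcompl : IsCompl L₁ L₂)
    (C₁ C₂ : ℕ)
    (h₁ : ∀ u : U, Submodule.linearProjOfIsCompl L₁ L₂ hcompl (ε u) ≠ 0 →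
      C₁ ≤ Nat.card (MulAction.orbit S u))
    (h₂ : ∀ u : U, Submodule.linearProjOfIsCompl L₂ L₁ hcompl.symm (ε u) ≠ 0 →
      C₂ ≤ Nat.card (MulAction.orbit S u))
    (Γ : Finset U) (hΓinv : ∀ (s : S), ∀ g ∈ Γ, s • g ∈ Γ)
    (hidx : (AddSubgroup.closure (Γ : Set U)).index ≠ 0)
    (hcop : ¬ p ∣ (AddSubgroup.closure (Γ : Set U)).index) :
    C₁ * Module.finrank (ZMod p) L₁ + C₂ * Module.finrank (ZMod p) L₂ ≤ Γ.card := by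
  rcases le_total C₂ C₁ with h | h
  · exact stmt_3_aux hp ε hsurj hinv L₁ L₂ hcompl C₁ C₂ h h₁ h₂ Γ hΓinv hcop
  · have := stmt_3_aux hp ε hsurj hinv L₂ L₁ hcompl.symm C₂ C₁ h h₂ h₁ Γ hΓinv hcop
    linarith
end

section
/- Let n = 2^r·m with r ≥ 0 and m odd, V = F_2^r, K = V × {1,…,m}, and Q(D_n) = { x ∈ Z^K : Σ_k x_k is even }. Fix a basis b_1,…,b_m of F_2^m and let ε : Q(D_n) → V ⊕ (F_2^m)_0 be given by ε(x) = Σ_{(v,i)} x_{v,i}(v + b_i), where (F_2^m)_0 is the sum-zero subspace. Then for every root α = ±e_{(v,i)} ± e_{(v',j)} with (v,i) ≠ (v',j), one has ε(α) ≠ 0. -/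
/-- For the grading `ε : Q(D_n) → V ⊕ (𝔽₂^m)₀`, `ε(x) = Σ x_{v,i}(v + b_i)`
(with `V = 𝔽₂^r`, `K = V × {1,…,m}`, `b` a basis of `𝔽₂^m`), every root
`α = ±e_{(v,i)} ± e_{(v',j)}` with `(v,i) ≠ (v',j)` satisfies `ε(α) ≠ 0`. -/
theorem stmt_7 (r m n : ℕ) (hm : Odd m) (hn : n = 2 ^ r * m)
    (b : Module.Basis (Fin m) (ZMod 2) (Fin m → ZMod 2))
    (k s : (Fin r → ZMod 2) × Fin m) (hks : k ≠ s)
    (ζ η : ℤ) (hζ : ζ = 1 ∨ ζ = -1) (hη : η = 1 ∨ η = -1) :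
    ¬ ((∑ t : (Fin r → ZMod 2) × Fin m,
          (((if t = k then ζ else 0) + (if t = s then η else 0)) • t.1) = 0) ∧
       (∑ t : (Fin r → ZMod 2) × Fin m,
          (((if t = k then ζ else 0) + (if t = s then η else 0)) • b t.2) = 0)) := by
  rintro ⟨h1, h2⟩
  have negself : ∀ (M : Type) [AddCommGroup M] [Module (ZMod 2) M] (v : M), -v = v := by
    intro M _ _ v
    rw [neg_eq_iff_add_eq_zero, ← two_smul (ZMod 2) v,
      show (2 : ZMod 2) = 0 from rfl, zero_smul]
  have zsm : ∀ (M : Type) [AddCommGroup M] [Module (ZMod 2) M] (v : M), ζ • v = v ∧ η • v = v := by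
    intro M _ _ v
    constructor
    · rcases hζ with h | h <;> subst h <;> simp [neg_zsmul, negself]
    · rcases hη with h | h <;> subst h <;> simp [neg_zsmul, negself]
  simp only [add_smul, ite_smul, zero_smul, Finset.sum_add_distrib,
    Finset.sum_ite_eq', Finset.mem_univ, if_true] at h1 h2
  rw [(zsm _ k.1).1, (zsm _ s.1).2] at h1
  rw [(zsm _ (b k.2)).1, (zsm _ (b s.2)).2] at h2
  have e1 := (negself _ s.1) ▸ neg_eq_of_add_eq_zero_left h1
  have e2 := (negself _ (b s.2)) ▸ neg_eq_of_add_eq_zero_left h2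
  exact hks (Prod.ext e1.symm (b.injective e2.symm))
end

section
/- Let V = F_2^3, K = V × {1} identified with V, and let W(ε) = V ⋉ (F_2^V)_0 act on Q(D_8) = { x ∈ Z^V : Σ_v x_v even } via translations of the index set and sign changes. For any x ∈ Q(D_8) with x ≠ 0, the stabilizer of x in W(ε) has order at most 2^{6}, i.e., |Stab_{W(ε)}(x)| ≤ 2^{|V| − 2}. -/
private lemma sign_inj_aux (a b : ZMod 2) (h : ((-1:ℤ))^a.val = (-1)^b.val) : a = b := by
  revert a b; decide

/-- For `V = 𝔽₂³` and `W(ε) = V ⋉ (𝔽₂^V)₀` acting on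
`Q(D₈) = {x ∈ ℤ^V : Σ x_v even}` by `(u,δ) • e_v = (−1)^{δ_v} e_{u+v}`,
the stabilizer of any nonzero `x` has order at most `2^6 = 2^{|V|−2}`. -/
theorem stmt_9 (x : (Fin 3 → ZMod 2) → ℤ)
    (hx : Even (∑ v : Fin 3 → ZMod 2, x v)) (hx0 : x ≠ 0) :
    Nat.card {w : (Fin 3 → ZMod 2) × ((Fin 3 → ZMod 2) → ZMod 2) //
        (∑ v : Fin 3 → ZMod 2, w.2 v) = 0 ∧
        ∀ v : Fin 3 → ZMod 2, (-1 : ℤ) ^ (w.2 v).val * x v = x (w.1 + v)} ≤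
      2 ^ 6 := by
  classical
  obtain ⟨v0, hv0⟩ : ∃ v, x v ≠ 0 := by
    by_contra h; push_neg at h; exact hx0 (funext h)
  by_cases hfull : ∀ v, x v ≠ 0
  · -- full support: the translation determines the signs
    have hinj : Function.Injective
        (fun w : {w : (Fin 3 → ZMod 2) × ((Fin 3 → ZMod 2) → ZMod 2) //
          (∑ v : Fin 3 → ZMod 2, w.2 v) = 0 ∧
          ∀ v : Fin 3 → ZMod 2, (-1 : ℤ) ^ (w.2 v).val * x v = x (w.1 + v)} => w.1.1) := by
      rintro ⟨⟨u, δ⟩, hs, hw⟩ ⟨⟨u', δ'⟩, hs', hw'⟩ h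
      simp only at h
      subst h
      have hδ : δ = δ' := by
        funext v
        apply sign_inj_aux
        exact mul_right_cancel₀ (hfull v) ((hw v).trans (hw' v).symm)
      simp [hδ]
    have := Nat.card_le_card_of_injective _ hinj
    calc Nat.card _ ≤ Nat.card (Fin 3 → ZMod 2) := this
      _ ≤ 2 ^ 6 := by
          simp [Nat.card_eq_fintype_card]
  · push_neg at hfull
    obtain ⟨v1, hv1⟩ := hfull
    set A := {v : Fin 3 → ZMod 2 // x v ≠ 0} with hA
    set B := {v : Fin 3 → ZMod 2 // x v = 0 ∧ v ≠ v1} with hB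
    -- injection into A × (B → ZMod 2)
    have hinj : ∃ f : {w : (Fin 3 → ZMod 2) × ((Fin 3 → ZMod 2) → ZMod 2) //
          (∑ v : Fin 3 → ZMod 2, w.2 v) = 0 ∧
          ∀ v : Fin 3 → ZMod 2, (-1 : ℤ) ^ (w.2 v).val * x v = x (w.1 + v)} →
          A × (B → ZMod 2), Function.Injective f := by
      refine ⟨fun w => (⟨w.1.1 + v0, ?_⟩, fun b => w.1.2 b.1), ?_⟩
      · rw [← w.2.2 v0]
        exact mul_ne_zero (pow_ne_zero _ (by norm_num)) hv0
      · rintro ⟨⟨u, δ⟩, hs, hw⟩ ⟨⟨u', δ'⟩, hs', hw'⟩ h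
        rw [Prod.ext_iff] at h
        obtain ⟨h1, h2⟩ := h
        have hu : u = u' := by
          have := congrArg Subtype.val h1
          simpa using this
        have key : ∀ v, v ≠ v1 → δ v = δ' v := by
          intro v hne
          by_cases hxv : x v = 0
          · exact congrFun h2 ⟨v, hxv, hne⟩
          · apply sign_inj_aux
            have hwv := hw v
            rw [hu] at hwv
            exact mul_right_cancel₀ hxv (hwv.trans (hw' v).symm)
        have hv1eq : δ v1 = δ' v1 := by
          have t1 : δ v1 + ∑ w ∈ Finset.univ.erase v1, δ w = 0 := by
            rw [Finset.add_sum_erase Finset.univ δ (Finset.mem_univ v1)]; exact hs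
          have t2 : δ' v1 + ∑ w ∈ Finset.univ.erase v1, δ' w = 0 := by
            rw [Finset.add_sum_erase Finset.univ δ' (Finset.mem_univ v1)]; exact hs'
          have hsum : ∑ w ∈ Finset.univ.erase v1, δ w
              = ∑ w ∈ Finset.univ.erase v1, δ' w :=
            Finset.sum_congr rfl fun w hwmem => key w (Finset.ne_of_mem_erase hwmem)
          rw [hsum] at t1
          exact add_right_cancel (t1.trans t2.symm)
        have hδ : δ = δ' := by
          funext v
          by_cases hvv : v = v1
          · subst hvv; exact hv1eq
          · exact key v hvv
        simp [hu, hδ]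
    obtain ⟨f, hf⟩ := hinj
    have hle := Nat.card_le_card_of_injective f hf
    have hcardprod : Nat.card (A × (B → ZMod 2))
        = Fintype.card A * 2 ^ Fintype.card B := by
      simp [Nat.card_eq_fintype_card]
    set n := Fintype.card A with hn'
    set m := Fintype.card B with hm'
    have hn : 1 ≤ n := Fintype.card_pos_iff.mpr ⟨⟨v0, hv0⟩⟩
    -- n + m + 1 ≤ 8
    have hnm : n + (m + 1) ≤ 8 := by
      have hg : Function.Injective
          (Sum.elim (Subtype.val : A → _)
            (Sum.elim (Subtype.val : B → _) (fun _ : Unit => v1))) := by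
        rintro (⟨a, ha⟩ | ⟨b, hb⟩ | ⟨⟩) (⟨a', ha'⟩ | ⟨b', hb'⟩ | ⟨⟩) h <;>
          simp only [Sum.elim_inl, Sum.elim_inr] at h
        · exact congrArg Sum.inl (Subtype.ext h)
        · exact absurd hb'.1 (by rw [← h]; exact ha)
        · exact absurd hv1 (by rw [← h]; exact ha)
        · exact absurd hb.1 (by rw [h]; exact ha')
        · exact congrArg (fun s => Sum.inr (Sum.inl s)) (Subtype.ext h)
        · exact absurd h hb.2
        · exact absurd hv1 (by rw [h]; exact ha')
        · exact absurd h.symm hb'.2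
        · rfl
      have hcle := Fintype.card_le_of_injective _ hg
      have h8 : Fintype.card (Fin 3 → ZMod 2) = 8 := by simp
      rw [Fintype.card_sum, Fintype.card_sum, Fintype.card_punit, h8] at hcle
      exact hcle
    have hpow : n ≤ 2 ^ (n - 1) := by
      have := Nat.lt_two_pow_self (n := n - 1)
      omega
    calc Nat.card _ ≤ Nat.card (A × (B → ZMod 2)) := hle
      _ = n * 2 ^ m := hcardprod
      _ ≤ 2 ^ (n - 1) * 2 ^ m := Nat.mul_le_mul_right _ hpow
      _ = 2 ^ (n - 1 + m) := (pow_add 2 _ _).symm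
      _ ≤ 2 ^ 6 := Nat.pow_le_pow_right (by norm_num) (by omega)
end

section
/- Let k be a field and R a finite-dimensional commutative k-algebra with dim_k R coprime to a prime p. If k has no finite field extensions of degree > 1 coprime to p (k is p-closed), then there exists a k-algebra homomorphism R → k. -/
open Module

/-- From a field extension of degree one, get an algebra hom back to the base field. -/
noncomputable def algHomOfFinrankEqOne {k K : Type*} [Field k] [Field K] [Algebra k K]
    (h : Module.finrank k K = 1) : K →ₐ[k] k :=
  (Algebra.botEquiv k K).toAlgHom.comp
    ((Subalgebra.equivOfEq ⊤ ⊥ (Subalgebra.bot_eq_top_of_finrank_eq_one h).symm).toAlgHom.comp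
      Subalgebra.topEquiv.symm.toAlgHom)

theorem stmt_19_aux {k : Type u} [Field k] (p : ℕ) (hp : p.Prime)
    (hclosed : ∀ (K : Type v) [Field K] [Algebra k K],
      FiniteDimensional k K → Nat.Coprime (Module.finrank k K) p →
      Module.finrank k K = 1) :
    ∀ (n : ℕ) (R : Type v) [CommRing R] [Algebra k R] [FiniteDimensional k R],
      Module.finrank k R = n → Nat.Coprime (Module.finrank k R) p →
      Nonempty (R →ₐ[k] k) := by
  have key : ∀ t : ℕ, Nat.Coprime t p ↔ ¬ p ∣ t := fun t =>
    Nat.coprime_comm.trans hp.coprime_iff_not_dvd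
  intro n
  induction n using Nat.strong_induction_on with
  | _ n ih =>
    intro R _ _ _ hn hdim
    -- R is nontrivial
    have hn0 : finrank k R ≠ 0 := by
      intro h
      rw [h] at hdim
      exact hp.one_lt.ne' (Nat.coprime_zero_left p |>.mp hdim)
    have : Nontrivial R := by
      by_contra h
      rw [not_nontrivial_iff_subsingleton] at h
      exact hn0 (by simpa using Module.finrank_zero_of_subsingleton (R := k) (M := R))
    -- find a minimal nonzero ideal I (an atom)
    have hart : IsArtinian R R := isArtinian_of_tower k inferInstance
    have hatomic : IsAtomic (Ideal R) := inferInstance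
    have htop : (⊤ : Ideal R) ≠ ⊥ := by
      intro h
      exact one_ne_zero ((Submodule.eq_bot_iff _).mp h 1 trivial)
    obtain ⟨I, hI, -⟩ := (hatomic.eq_bot_or_exists_atom_le (⊤ : Ideal R)).resolve_left htop
    have hsimple : IsSimpleModule R I := isSimpleModule_iff_isAtom.mpr hI
    obtain ⟨x, hxI, hx0⟩ := Submodule.exists_mem_ne_zero_of_ne_bot hI.1
    have hx0' : (⟨x, hxI⟩ : I) ≠ 0 := Subtype.coe_ne_coe.mp hx0
    set f := LinearMap.toSpanSingleton R I ⟨x, hxI⟩ with hf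
    have hfsurj : Function.Surjective f := IsSimpleModule.toSpanSingleton_surjective R hx0'
    set m : Ideal R := LinearMap.ker f with hm
    have hmmax : m.IsMaximal := IsSimpleModule.ker_toSpanSingleton_isMaximal R hx0'
    -- R ⧸ m ≃ I as R-modules, hence as k-modules
    have e : (R ⧸ m) ≃ₗ[R] I := f.quotKerEquivOfSurjective hfsurj
    have hdK : finrank k (R ⧸ m) = finrank k I := (e.restrictScalars k).finrank_eq
    -- dimension count for the quotient by I
    have hres : finrank k (I.restrictScalars k) = finrank k I := rfl
    have hresq : finrank k (R ⧸ (I.restrictScalars k)) = finrank k ((R ⧸ I) : Type v) :=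
      (Submodule.Quotient.restrictScalarsEquiv k I).finrank_eq
    have hsum : finrank k (R ⧸ (I.restrictScalars k)) + finrank k (I.restrictScalars k)
        = finrank k R := Submodule.finrank_quotient_add_finrank _
    have hIpos : 0 < finrank k I := by
      have : Nontrivial I := ⟨⟨⟨x, hxI⟩, 0, hx0'⟩⟩
      exact finrank_pos
    by_cases hdvd : p ∣ finrank k (R ⧸ m)
    · -- quotient by I has dimension coprime to p; use induction
      have hdvdI : p ∣ finrank k I := hdK ▸ hdvd
      have hlt : finrank k ((R ⧸ I) : Type v) < n := by omega
      have hcop : Nat.Coprime (finrank k ((R ⧸ I) : Type v)) p := by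
        rw [key]
        intro hc
        exact (key _).mp hdim (by
          rw [← hsum, hresq, hres]
          exact Nat.dvd_add hc hdvdI)
      have : FiniteDimensional k ((R ⧸ I) : Type v) :=
        Module.Finite.of_surjective (IsScalarTower.toAlgHom k R (R ⧸ I)).toLinearMap
          (Ideal.Quotient.mk_surjective)
      obtain ⟨g⟩ := ih _ hlt (R ⧸ I) rfl hcop
      exact ⟨g.comp (Ideal.Quotient.mkₐ k I)⟩
    · -- residue field has degree coprime to p, hence equals k
      have hfin : FiniteDimensional k ((R ⧸ m) : Type v) :=
        Module.Finite.of_surjective (IsScalarTower.toAlgHom k R (R ⧸ m)).toLinearMap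
          (Ideal.Quotient.mk_surjective)
      letI hfield : Field (R ⧸ m) := Ideal.Quotient.field m
      have hcop : Nat.Coprime (finrank k ((R ⧸ m) : Type v)) p := (key _).mpr hdvd
      have h1 : finrank k ((R ⧸ m) : Type v) = 1 := hclosed _ hfin hcop
      exact ⟨(algHomOfFinrankEqOne h1).comp (Ideal.Quotient.mkₐ k m)⟩

/-- Let `k` be a `p`-closed field (no nontrivial finite extensions of degree
coprime to `p`) and `R` a finite-dimensional commutative `k`-algebra with
`dim_k R` coprime to `p`. Then there is a `k`-algebra homomorphism `R → k`. -/
theorem stmt_19 {k : Type u} {R : Type v} [Field k] [CommRing R] [Algebra k R]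
    [FiniteDimensional k R] (p : ℕ) (hp : p.Prime)
    (hdim : Nat.Coprime (Module.finrank k R) p)
    (hclosed : ∀ (K : Type v) [Field K] [Algebra k K],
      FiniteDimensional k K → Nat.Coprime (Module.finrank k K) p →
      Module.finrank k K = 1) :
    Nonempty (R →ₐ[k] k) := by
  exact stmt_19_aux p hp hclosed (Module.finrank k R) R rfl hdim
end
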